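/- The map defined on the generators of G by a ↦ cᵃ, b ↦ d, c ↦ bᵃ, d ↦ c extends to a group endomorphism φ : G → G. -/

import Mathlib

open Equiv

/-! ## The binary rooted tree and the twisted twin of the Grigorchuk group

We identify the vertex set of the infinite rooted binary tree with `V = List Bool`
(the free monoid `X*` on `X = {0,1}`), and realize automorphisms of the tree as
permutations of `V`.  The generators `a, b, c, d` of the twisted twin `G` of the
Grigorchuk group are defined by the recursive rules
`a(xw) = (¬x)w`, `ψ(b) = (c,a)`, `ψ(c) = (a,d)`, `ψ(d) = (1,b)`. -/

abbrev V : Type := List Bool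

def actA : V → V
  | [] => []
  | x :: w => (!x) :: w

theorem actA_invol : Function.Involutive actA := fun w => by
  cases w with
  | nil => rfl
  | cons x w => simp [actA]

mutual
  def actB : V → V
    | [] => []
    | false :: w => false :: actC w
    | true :: w => true :: actA w
  def actC : V → V
    | [] => []
    | false :: w => false :: actA w
    | true :: w => true :: actD w
  def actD : V → V
    | [] => []
    | false :: w => false :: w
    | true :: w => true :: actB w
end

theorem act_invol3 (w : V) :
    actB (actB w) = w ∧ actC (actC w) = w ∧ actD (actD w) = w := by
  induction w with
  | nil => exact ⟨rfl, rfl, rfl⟩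
  | cons x w ih =>
    cases x <;>
      exact ⟨by simp [actB, actC, actD, ih.1, ih.2.1, ih.2.2, actA_invol w],
        by simp [actB, actC, actD, ih.1, ih.2.1, ih.2.2, actA_invol w],
        by simp [actB, actC, actD, ih.1, ih.2.1, ih.2.2, actA_invol w]⟩

theorem actB_invol : Function.Involutive actB := fun w => (act_invol3 w).1
theorem actC_invol : Function.Involutive actC := fun w => (act_invol3 w).2.1
theorem actD_invol : Function.Involutive actD := fun w => (act_invol3 w).2.2

/-- The generator `a`: the root swap. -/
def a : Perm V := actA_invol.toPerm actA
/-- The generator `b`, with `ψ(b) = (c, a)`. -/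
def b : Perm V := actB_invol.toPerm actB
/-- The generator `c`, with `ψ(c) = (a, d)`. -/
def c : Perm V := actC_invol.toPerm actC
/-- The generator `d`, with `ψ(d) = (1, b)`. -/
def d : Perm V := actD_invol.toPerm actD

@[simp] theorem coe_a : ⇑a = actA := rfl
@[simp] theorem coe_b : ⇑b = actB := rfl
@[simp] theorem coe_c : ⇑c = actC := rfl
@[simp] theorem coe_d : ⇑d = actD := rfl

/-- The twisted twin of the Grigorchuk group. -/
def G : Subgroup (Perm V) := Subgroup.closure {a, b, c, d}

theorem a_mem_G : a ∈ G := Subgroup.subset_closure (by simp)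
theorem b_mem_G : b ∈ G := Subgroup.subset_closure (by simp)
theorem c_mem_G : c ∈ G := Subgroup.subset_closure (by simp)
theorem d_mem_G : d ∈ G := Subgroup.subset_closure (by simp)

/-- `hasState g v s` says that the state (section) of `g` at the vertex `v` is `s`,
i.e. `g (v ++ w) = g v ++ s w` for all `w`. -/
def hasState (g : Perm V) (v : V) (s : Perm V) : Prop :=
  ∀ w : V, g (v ++ w) = g v ++ s w

def vstarFun (v : V) (f : V → V) : V → V :=
  fun w => if v <+: w then v ++ f (w.drop v.length) else w

theorem vstarFun_comp (v : V) (f f' : V → V) (w : V) :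
    vstarFun v f (vstarFun v f' w) = vstarFun v (f ∘ f') w := by
  by_cases h : v <+: w
  · obtain ⟨t, rfl⟩ := h
    simp [vstarFun, List.prefix_append, List.drop_left]
  · simp [vstarFun, h]

theorem vstarFun_id (v w : V) : vstarFun v id w = w := by
  by_cases h : v <+: w
  · obtain ⟨t, rfl⟩ := h
    simp [vstarFun, List.prefix_append, List.drop_left]
  · simp [vstarFun, h]

/-- `vstar v g` is the automorphism `v * g`, acting as `g` on the subtree rooted
at `v` and trivially elsewhere. -/
def vstar (v : V) (g : Perm V) : Perm V where
  toFun := vstarFun v g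
  invFun := vstarFun v g.symm
  left_inv := fun w => by
    rw [vstarFun_comp, Equiv.symm_comp_self]
    exact vstarFun_id v w
  right_inv := fun w => by
    rw [vstarFun_comp, Equiv.self_comp_symm]
    exact vstarFun_id v w

/-- `XstarSub n H` is the subgroup `Xⁿ * H`: the product of the copies `v * H`
over all vertices `v` of level `n` (equivalently, the subgroup they generate). -/
def XstarSub (n : ℕ) (H : Subgroup (Perm V)) : Subgroup (Perm V) :=
  Subgroup.closure {p | ∃ v : V, ∃ g : Perm V, v.length = n ∧ g ∈ H ∧ p = vstar v g}

/-- `pairPerm s₀ s₁ = ψ⁻¹(s₀, s₁)`: the first-level stabilizer element whose states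
at the vertices `0` and `1` are `s₀` and `s₁`. -/
def pairPerm (s₀ s₁ : Perm V) : Perm V := vstar [false] s₀ * vstar [true] s₁

/-- The permutations fixing every vertex of level `n`. -/
def stabLevel (n : ℕ) : Subgroup (Perm V) where
  carrier := {g : Perm V | ∀ v : V, v.length = n → g v = v}
  one_mem' := fun _ _ => rfl
  mul_mem' := by
    intro g h hg hh v hv
    show g (h v) = v
    rw [hh v hv, hg v hv]
  inv_mem' := by
    intro g hg v hv
    show g⁻¹ v = v
    conv_lhs => rw [← hg v hv]
    exact g.symm_apply_apply v

/-- The `n`-th level stabilizer `Stab_G(n)` of `G`. -/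
def stabG (n : ℕ) : Subgroup (Perm V) := G ⊓ stabLevel n

/-- The commutator `[x, y] = x⁻¹ y⁻¹ x y` (paper convention). -/
def pc (x y : Perm V) : Perm V := x⁻¹ * y⁻¹ * x * y
/-- Conjugation `xʸ = y⁻¹ x y`. -/
def cj (x y : Perm V) : Perm V := y⁻¹ * x * y

/-- The normal closure in `G` of a subset `S` of `G`. -/
def ncl (S : Set (Perm V)) : Subgroup (Perm V) :=
  Subgroup.closure {x | ∃ s ∈ S, ∃ g ∈ G, x = g⁻¹ * s * g}

/-- `K = ⟨[a,b],[b,c],[b,d],[c,d], bcd⟩^G`. -/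
def K : Subgroup (Perm V) := ncl {pc a b, pc b c, pc b d, pc c d, b * c * d}

/-- The subgroup `[K, G]`. -/
def KG : Subgroup (Perm V) := ⁅K, G⁆

/-- The subgroup `C`, generated by `[K,G]` and `[a,b][b,c]`. -/
def Csub : Subgroup (Perm V) := KG ⊔ Subgroup.closure {pc a b * pc b c}

/-- `γ_n(G)`, the `n`-th term of the lower central series of `G` (starting at `γ₁ = G`),
viewed as a subgroup of `Perm V`. -/
def gammaG (n : ℕ) : Subgroup (Perm V) :=
  Subgroup.map G.subtype ((⊤ : Subgroup ↥G).lowerCentralSeries (n - 1))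

/-! The endomorphism is `φ g = ψ⁻¹(σ g, g)`, where `σ` is the map `a ↦ d, b ↦ 1, c ↦ a, d ↦ a`
into the dihedral group `⟨a, d⟩` of order 8, so everything reduces to `σ` being well defined.
It is: `σ` factors through the action of `G` on the third level of the tree, via an explicit
homomorphism from the group of depth-3 portraits onto `⟨a, d⟩ ≅ C₂ ≀ C₂`, and the factorisation
only has to be checked on the 128 portraits and the four generators. Well-definedness is phrased
through graphs: a subgroup of `M × N` meeting `1 × N` trivially is the graph of a homomorphism. -/

section Graph

variable {M N : Type*} [Group M] [Group N]

theorem Subgroup.eq_of_mem_graph (Γ : Subgroup (M × N)) (hΓ : ∀ p ∈ Γ, p.1 = 1 → p.2 = 1)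
    {x : M} {y y' : N} (hy : (x, y) ∈ Γ) (hy' : (x, y') ∈ Γ) : y = y' :=
  inv_mul_eq_one.mp (hΓ _ (Γ.mul_mem (Γ.inv_mem hy) hy') (inv_mul_cancel x))

theorem Subgroup.exists_monoidHom_of_graph (Γ : Subgroup (M × N))
    (hΓ : ∀ p ∈ Γ, p.1 = 1 → p.2 = 1) {H : Subgroup M} (hH : H ≤ Γ.map (MonoidHom.fst M N)) :
    ∃ φ : H →* N, ∀ x : H, ((x : M), φ x) ∈ Γ := by
  have hex (x : H) : ∃ y, ((x : M), y) ∈ Γ := by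
    obtain ⟨p, hp, hpx⟩ := hH x.2
    exact ⟨p.2, by rwa [← hpx]⟩
  choose f hf using hex
  exact ⟨{ toFun := f
           map_one' := Γ.eq_of_mem_graph hΓ (hf 1) Γ.one_mem
           map_mul' := fun x y =>
             Γ.eq_of_mem_graph hΓ (hf (x * y)) (Γ.mul_mem (hf x) (hf y)) }, hf⟩

end Graph

theorem a_mul_a : a * a = 1 := Equiv.ext actA_invol
theorem b_mul_b : b * b = 1 := Equiv.ext actB_invol

theorem a_inv : a⁻¹ = a := inv_eq_of_mul_eq_one_right a_mul_a
theorem b_inv : b⁻¹ = b := inv_eq_of_mul_eq_one_right b_mul_b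
theorem c_inv : c⁻¹ = c := inv_eq_of_mul_eq_one_right (Equiv.ext actC_invol)
theorem d_inv : d⁻¹ = d := inv_eq_of_mul_eq_one_right (Equiv.ext actD_invol)

theorem pairPerm_nil (s t : Perm V) : pairPerm s t [] = [] := by
  simp [pairPerm, vstar, vstarFun]

theorem pairPerm_cons (s t : Perm V) (x : Bool) (u : V) :
    pairPerm s t (x :: u) = x :: (bif x then t else s) u := by
  cases x <;> simp [pairPerm, vstar, vstarFun]

theorem pairPerm_mul (s t s' t' : Perm V) :
    pairPerm s t * pairPerm s' t' = pairPerm (s * s') (t * t') := by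
  ext1 w
  cases w with
  | nil => simp [pairPerm_nil]
  | cons x u => cases x <;> simp [pairPerm_cons]

theorem pairPerm_one : pairPerm 1 1 = 1 := by
  ext1 w
  cases w with
  | nil => simp [pairPerm_nil]
  | cons x u => cases x <;> simp [pairPerm_cons]

theorem cj_pairPerm_a (s t : Perm V) : cj (pairPerm s t) a = pairPerm t s := by
  ext1 w
  cases w with
  | nil => simp [cj, a_inv, pairPerm_nil, actA]
  | cons x u => cases x <;> simp [cj, a_inv, Perm.mul_apply, pairPerm_cons, actA]

theorem pairPerm_c_a : pairPerm c a = b := by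
  ext1 w
  cases w with
  | nil => simp [pairPerm_nil, actB]
  | cons x u => cases x <;> simp [pairPerm_cons, actB]

theorem pairPerm_a_d : pairPerm a d = c := by
  ext1 w
  cases w with
  | nil => simp [pairPerm_nil, actC]
  | cons x u => cases x <;> simp [pairPerm_cons, actC]

theorem pairPerm_one_b : pairPerm 1 b = d := by
  ext1 w
  cases w with
  | nil => simp [pairPerm_nil, actD]
  | cons x u => cases x <;> simp [pairPerm_cons, actD]

theorem pairPerm_d_a : pairPerm d a = cj c a := by
  rw [← pairPerm_a_d, cj_pairPerm_a]

theorem pairPerm_a_c : pairPerm a c = cj b a := by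
  rw [← pairPerm_c_a, cj_pairPerm_a]

/-- A portrait of depth 3: `root`, `mid x` and `low x y` tell whether the automorphism swaps
the two subtrees below the vertices `∅`, `x` and `xy`. -/
structure Portrait where
  root : Bool
  mid : Bool → Bool
  low : Bool → Bool → Bool

namespace Portrait

instance : One Portrait := ⟨⟨false, fun _ => false, fun _ _ => false⟩⟩

def act (p : Portrait) (x y z : Bool) : V := [x ^^ p.root, y ^^ p.mid x, z ^^ p.low x y]

def comp (p q : Portrait) : Portrait where
  root := q.root ^^ p.root
  mid x := q.mid x ^^ p.mid (x ^^ q.root)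
  low x y := q.low x y ^^ p.low (x ^^ q.root) (y ^^ q.mid x)

theorem act_comp (p q : Portrait) (x y z : Bool) :
    (p.comp q).act x y z = p.act (x ^^ q.root) (y ^^ q.mid x) (z ^^ q.low x y) := by
  simp [act, comp]

end Portrait

def HasPortrait (g : Perm V) (p : Portrait) : Prop :=
  ∀ x y z : Bool, g [x, y, z] = p.act x y z

theorem HasPortrait.mul {g h : Perm V} {p q : Portrait} (hg : HasPortrait g p)
    (hh : HasPortrait h q) : HasPortrait (g * h) (p.comp q) := fun x y z => by
  rw [Perm.mul_apply, hh, Portrait.act_comp]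
  exact hg _ _ _

theorem hasPortrait_one : HasPortrait 1 1 := fun x y z => by
  change [x, y, z] = [x ^^ false, y ^^ false, z ^^ false]
  simp

theorem HasPortrait.eq_one {p : Portrait} (h : HasPortrait 1 p) : p = 1 := by
  obtain ⟨r, s, t⟩ := p
  have key (x y : Bool) : r = false ∧ s x = false ∧ t x y = false := by
    have := h x y false
    cases x <;> cases y <;> simp_all [Portrait.act]
  obtain ⟨rfl, -, -⟩ := key false false
  congr
  · funext x; exact (key x false).2.1
  · funext x y; exact (key x y).2.2

def aPortrait : Portrait := ⟨true, fun _ => false, fun _ _ => false⟩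
def bPortrait : Portrait := ⟨false, fun x => x, fun x y => !x && !y⟩
def cPortrait : Portrait := ⟨false, fun x => !x, fun _ _ => false⟩
def dPortrait : Portrait := ⟨false, fun _ => false, fun x y => x && y⟩

theorem hasPortrait_a : HasPortrait a aPortrait := fun x y z => by
  cases x <;> cases y <;> cases z <;> rfl
theorem hasPortrait_b : HasPortrait b bPortrait := fun x y z => by
  cases x <;> cases y <;> cases z <;> rfl
theorem hasPortrait_c : HasPortrait c cPortrait := fun x y z => by
  cases x <;> cases y <;> cases z <;> rfl
theorem hasPortrait_d : HasPortrait d dPortrait := fun x y z => by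
  cases x <;> cases y <;> cases z <;> rfl

/-- `dihedralElt e i j = aᵉ · ψ⁻¹(bⁱ, bʲ)`; these eight elements form `⟨a, d⟩ ≅ C₂ ≀ C₂`. -/
def dihedralElt (e i j : Bool) : Perm V :=
  (bif e then a else 1) * pairPerm (bif i then b else 1) (bif j then b else 1)

theorem dihedralElt_false : dihedralElt false false false = 1 := by
  simp [dihedralElt, pairPerm_one]

theorem a_mul_dihedralElt (e i j : Bool) : a * dihedralElt e i j = dihedralElt (!e) i j := by
  cases e <;> simp [dihedralElt, ← mul_assoc, a_mul_a]

theorem d_mul_dihedralElt (e i j : Bool) :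
    d * dihedralElt e i j = dihedralElt e (i ^^ e) (j ^^ !e) := by
  have hb (k : Bool) : b * (bif k then b else 1) = bif !k then b else 1 := by
    cases k <;> simp [b_mul_b]
  cases e
  · simp [dihedralElt, ← pairPerm_one_b, pairPerm_mul, hb]
  · have hda : d * a = a * pairPerm b 1 := by
      rw [← cj_pairPerm_a, pairPerm_one_b, cj, a_inv]
      simp [← mul_assoc, a_mul_a]
    simp [dihedralElt, ← mul_assoc, hda, mul_assoc a, pairPerm_mul, hb]

namespace Portrait

/-- The homomorphism from depth-3 portraits onto `⟨a, d⟩ ≅ C₂ ≀ C₂` through which `σ` factors;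
`e` is the parity of the labels on levels 1 and 2. -/
def sigma (p : Portrait) : Perm V :=
  let e := p.mid false ^^ p.mid true ^^ p.low false false ^^ p.low false true ^^
    p.low true false ^^ p.low true true
  let i := p.mid true ^^ p.low false false ^^ p.low false true ^^ (p.root && e)
  dihedralElt e i (i ^^ p.root)

theorem sigma_one : (1 : Portrait).sigma = 1 := dihedralElt_false

theorem sigma_aPortrait_comp (p : Portrait) : (aPortrait.comp p).sigma = d * p.sigma := by
  obtain ⟨r, s, t⟩ := p
  simp only [sigma, d_mul_dihedralElt]
  congr 1 <;> revert r s t <;> decide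

theorem sigma_bPortrait_comp (p : Portrait) : (bPortrait.comp p).sigma = p.sigma := by
  obtain ⟨r, s, t⟩ := p
  simp only [sigma]
  congr 1 <;> revert r s t <;> decide

theorem sigma_cPortrait_comp (p : Portrait) : (cPortrait.comp p).sigma = a * p.sigma := by
  obtain ⟨r, s, t⟩ := p
  simp only [sigma, a_mul_dihedralElt]
  congr 1 <;> revert r s t <;> decide

theorem sigma_dPortrait_comp (p : Portrait) : (dPortrait.comp p).sigma = a * p.sigma := by
  obtain ⟨r, s, t⟩ := p
  simp only [sigma, a_mul_dihedralElt]
  congr 1 <;> revert r s t <;> decide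

end Portrait

def sigmaGens : Set (Perm V × Perm V) := {(a, d), (b, 1), (c, a), (d, a)}

def sigmaGraph : Subgroup (Perm V × Perm V) := Subgroup.closure sigmaGens

theorem exists_hasPortrait_of_mem_sigmaGraph {q : Perm V × Perm V} (hq : q ∈ sigmaGraph) :
    ∃ p : Portrait, HasPortrait q.1 p ∧ q.2 = p.sigma := by
  have step {x : Perm V × Perm V} (hx : x ∈ sigmaGens) {q : Perm V × Perm V} :
      (∃ p : Portrait, HasPortrait q.1 p ∧ q.2 = p.sigma) →
      ∃ p : Portrait, HasPortrait (x * q).1 p ∧ (x * q).2 = p.sigma := by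
    rintro ⟨p, hp, hq⟩
    simp only [sigmaGens, Set.mem_insert_iff, Set.mem_singleton_iff] at hx
    rcases hx with rfl | rfl | rfl | rfl
    · exact ⟨_, hasPortrait_a.mul hp, by simp [hq, Portrait.sigma_aPortrait_comp]⟩
    · exact ⟨_, hasPortrait_b.mul hp, by simp [hq, Portrait.sigma_bPortrait_comp]⟩
    · exact ⟨_, hasPortrait_c.mul hp, by simp [hq, Portrait.sigma_cPortrait_comp]⟩
    · exact ⟨_, hasPortrait_d.mul hp, by simp [hq, Portrait.sigma_dPortrait_comp]⟩
  have self_inv {x : Perm V × Perm V} (hx : x ∈ sigmaGens) : x⁻¹ = x := by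
    simp only [sigmaGens, Set.mem_insert_iff, Set.mem_singleton_iff] at hx
    rcases hx with rfl | rfl | rfl | rfl <;> simp [a_inv, b_inv, c_inv, d_inv]
  induction hq using Subgroup.closure_induction_left with
  | one => exact ⟨1, hasPortrait_one, Portrait.sigma_one.symm⟩
  | mul_left x hx q _ ih => exact step hx ih
  | inv_mul_cancel x hx q _ ih => rw [self_inv hx]; exact step hx ih

theorem sigmaGraph_snd_eq_one {q : Perm V × Perm V} (hq : q ∈ sigmaGraph) (h1 : q.1 = 1) :
    q.2 = 1 := by
  obtain ⟨p, hp, hq2⟩ := exists_hasPortrait_of_mem_sigmaGraph hq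
  rw [h1] at hp
  rw [hq2, hp.eq_one, Portrait.sigma_one]

def pairPermGraphHom : Perm V × Perm V →* Perm V × Perm V where
  toFun q := (q.1, pairPerm q.2 q.1)
  map_one' := by simp [pairPerm_one]
  map_mul' q q' := by simp [pairPerm_mul]

def phiGraph : Subgroup (Perm V × Perm V) :=
  Subgroup.closure {(a, cj c a), (b, d), (c, cj b a), (d, c)}

theorem phiGraph_eq_map : phiGraph = sigmaGraph.map pairPermGraphHom := by
  simp [phiGraph, sigmaGraph, sigmaGens, MonoidHom.map_closure, Set.image_insert_eq,
    pairPermGraphHom, pairPerm_d_a, pairPerm_one_b, pairPerm_a_c, pairPerm_a_d]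

theorem phiGraph_snd_eq_one : ∀ q ∈ phiGraph, q.1 = 1 → q.2 = 1 := by
  rw [phiGraph_eq_map]
  rintro _ ⟨q, hq, rfl⟩ h1
  change q.1 = 1 at h1
  change pairPerm q.2 q.1 = 1
  rw [h1, sigmaGraph_snd_eq_one hq h1, pairPerm_one]

theorem phiGraph_le_prod : phiGraph ≤ G.prod G := by
  have cj_mem {x y : Perm V} (hx : x ∈ G) (hy : y ∈ G) : cj x y ∈ G :=
    G.mul_mem (G.mul_mem (G.inv_mem hy) hx) hy
  rw [phiGraph, Subgroup.closure_le]
  simp [Set.insert_subset_iff, Subgroup.mem_prod, a_mem_G, b_mem_G, c_mem_G, d_mem_G,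
    cj_mem c_mem_G a_mem_G, cj_mem b_mem_G a_mem_G]

theorem G_le_map_fst_phiGraph : G ≤ phiGraph.map (MonoidHom.fst _ _) := by
  rw [G, Subgroup.closure_le]
  simp only [Set.insert_subset_iff, Set.singleton_subset_iff]
  exact ⟨⟨(a, cj c a), Subgroup.subset_closure (by simp), rfl⟩,
    ⟨(b, d), Subgroup.subset_closure (by simp), rfl⟩,
    ⟨(c, cj b a), Subgroup.subset_closure (by simp), rfl⟩,
    ⟨(d, c), Subgroup.subset_closure (by simp), rfl⟩⟩

/-- **Proposition.** The map `a ↦ cᵃ, b ↦ d, c ↦ bᵃ, d ↦ c` extends to an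
endomorphism `φ` of `G`. -/
theorem stmt2 :
    ∃ φ : ↥G →* ↥G,
      (φ ⟨a, a_mem_G⟩ : Perm V) = cj c a ∧
      (φ ⟨b, b_mem_G⟩ : Perm V) = d ∧
      (φ ⟨c, c_mem_G⟩ : Perm V) = cj b a ∧
      (φ ⟨d, d_mem_G⟩ : Perm V) = c := by
  obtain ⟨φ, hφ⟩ := phiGraph.exists_monoidHom_of_graph phiGraph_snd_eq_one G_le_map_fst_phiGraph
  have value {x y : Perm V} (hx : x ∈ G) (hxy : (x, y) ∈ phiGraph) : φ ⟨x, hx⟩ = y :=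
    phiGraph.eq_of_mem_graph phiGraph_snd_eq_one (hφ ⟨x, hx⟩) hxy
  refine ⟨φ.codRestrict G fun x => (phiGraph_le_prod (hφ x)).2, ?_, ?_, ?_, ?_⟩ <;>
    exact value _ (Subgroup.subset_closure (by simp))
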